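/- Let I be a closed ideal of a Banach algebra A. If the quotient A/I is approximately weakly amenable, then I has the approximate trace extension property. -/

import Mathlib

open ContinuousLinearMap Filter Topology

open ContinuousLinearMap Filter Topology

/-- A Banach `A`-bimodule: a complete normed `ℂ`-space with commuting continuous
left and right `A`-actions, jointly bounded and bilinear. -/
structure BBimod (A : Type) [NonUnitalNormedRing A] [NormedSpace ℂ A] where
  carrier : Type
  [grp : NormedAddCommGroup carrier]
  [mod : NormedSpace ℂ carrier]
  [complete : CompleteSpace carrier]
  lsmul : A → carrier →L[ℂ] carrier
  rsmul : A → carrier →L[ℂ] carrier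
  lsmul_add : ∀ a b, lsmul (a + b) = lsmul a + lsmul b
  rsmul_add : ∀ a b, rsmul (a + b) = rsmul a + rsmul b
  lsmul_smul : ∀ (c : ℂ) (a), lsmul (c • a) = c • lsmul a
  rsmul_smul : ∀ (c : ℂ) (a), rsmul (c • a) = c • rsmul a
  lsmul_mul : ∀ a b, lsmul (a * b) = (lsmul a).comp (lsmul b)
  rsmul_mul : ∀ a b, rsmul (a * b) = (rsmul b).comp (rsmul a)
  lsmul_rsmul : ∀ a b, (lsmul a).comp (rsmul b) = (rsmul b).comp (lsmul a)
  bound : ∃ C : ℝ, ∀ a, ‖lsmul a‖ ≤ C * ‖a‖ ∧ ‖rsmul a‖ ≤ C * ‖a‖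

attribute [instance] BBimod.grp BBimod.mod BBimod.complete

variable {A : Type} [NonUnitalNormedRing A] [NormedSpace ℂ A]

/-- The dual of a Banach bimodule, with the canonical dual actions
`⟨u, Λ·a⟩ = ⟨a·u, Λ⟩` and `⟨u, a·Λ⟩ = ⟨u·a, Λ⟩`. -/
noncomputable def BBimod.dual (M : BBimod A) : BBimod A where
  carrier := M.carrier →L[ℂ] ℂ
  lsmul a := (compL ℂ M.carrier M.carrier ℂ).flip (M.rsmul a)
  rsmul a := (compL ℂ M.carrier M.carrier ℂ).flip (M.lsmul a)
  lsmul_add a b := by ext Λ x; simp [M.rsmul_add]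
  rsmul_add a b := by ext Λ x; simp [M.lsmul_add]
  lsmul_smul c a := by ext Λ x; simp [M.rsmul_smul]
  rsmul_smul c a := by ext Λ x; simp [M.lsmul_smul]
  lsmul_mul a b := by ext Λ x; simp [M.rsmul_mul]
  rsmul_mul a b := by ext Λ x; simp [M.lsmul_mul]
  lsmul_rsmul a b := by
    ext Λ x
    have h : M.lsmul b (M.rsmul a x) = M.rsmul a (M.lsmul b x) := by
      have := congrArg (fun T : M.carrier →L[ℂ] M.carrier => T x) (M.lsmul_rsmul b a)
      simpa using this
    simp [h]
  bound := by
    obtain ⟨C, hC⟩ := M.bound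
    refine ⟨C, fun a => ⟨?_, ?_⟩⟩
    · refine opNorm_le_bound _ ?_ fun Λ => ?_
      · exact le_trans (norm_nonneg _) (hC a).2
      · calc ‖Λ.comp (M.rsmul a)‖ ≤ ‖Λ‖ * ‖M.rsmul a‖ := opNorm_comp_le _ _
          _ ≤ (C * ‖a‖) * ‖Λ‖ := by
              rw [mul_comm]
              exact mul_le_mul_of_nonneg_right (hC a).2 (norm_nonneg _)
    · refine opNorm_le_bound _ ?_ fun Λ => ?_
      · exact le_trans (norm_nonneg _) (hC a).1
      · calc ‖Λ.comp (M.lsmul a)‖ ≤ ‖Λ‖ * ‖M.lsmul a‖ := opNorm_comp_le _ _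
          _ ≤ (C * ‖a‖) * ‖Λ‖ := by
              rw [mul_comm]
              exact mul_le_mul_of_nonneg_right (hC a).1 (norm_nonneg _)

variable (A) [IsScalarTower ℂ A A] [SMulCommClass ℂ A A] [CompleteSpace A]

/-- `A` as a Banach bimodule over itself. -/
noncomputable def BBimod.base : BBimod A where
  carrier := A
  lsmul a := ContinuousLinearMap.mul ℂ A a
  rsmul a := (ContinuousLinearMap.mul ℂ A).flip a
  lsmul_add a b := by ext x; simp [add_mul]
  rsmul_add a b := by ext x; simp [mul_add]
  lsmul_smul c a := by ext x; simp [smul_mul_assoc]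
  rsmul_smul c a := by ext x; simp [mul_smul_comm]
  lsmul_mul a b := by ext x; simp [mul_assoc]
  rsmul_mul a b := by ext x; simp [mul_assoc]
  lsmul_rsmul a b := by ext x; simp [mul_assoc]
  bound := by
    refine ⟨1, fun a => ⟨?_, ?_⟩⟩
    · simpa using ContinuousLinearMap.opNorm_mul_apply_le ℂ A a
    · refine le_trans (opNorm_le_bound _ (norm_nonneg a) fun x => ?_) (by simp)
      simpa [mul_comm] using norm_mul_le x a


/-- The `n`-th dual `A^(n)` of `A` as a Banach `A`-bimodule. -/
noncomputable def iterDual : ℕ → BBimod A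
  | 0 => BBimod.base A
  | n + 1 => (iterDual n).dual

variable {A}

/-- `D` is a derivation from `A` into the Banach bimodule `M`. -/
def IsDerivation (M : BBimod A) (D : A →L[ℂ] M.carrier) : Prop :=
  ∀ a b : A, D (a * b) = M.lsmul a (D b) + M.rsmul b (D a)

/-- `D` is an inner derivation. -/
def IsInner (M : BBimod A) (D : A →L[ℂ] M.carrier) : Prop :=
  ∃ x : M.carrier, ∀ a : A, D a = M.lsmul a x - M.rsmul a x

/-- `D` is approximately inner: there is a net `(x_i)` in `M` with
`D a = lim_i (a·x_i − x_i·a)` for every `a`. -/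
def IsApproxInner (M : BBimod A) (D : A →L[ℂ] M.carrier) : Prop :=
  ∃ (ι : Type) (l : Filter ι) (x : ι → M.carrier), l.NeBot ∧
    ∀ a : A, Tendsto (fun i => M.lsmul a (x i) - M.rsmul a (x i)) l (𝓝 (D a))

variable (A)

/-- `A` is weakly amenable. -/
def WeaklyAmenable : Prop :=
  ∀ D : A →L[ℂ] (iterDual A 1).carrier, IsDerivation (iterDual A 1) D → IsInner (iterDual A 1) D

/-- `A` is approximately `n`-weakly amenable. -/
def ApproxNWeaklyAmenable (n : ℕ) : Prop :=
  ∀ D : A →L[ℂ] (iterDual A n).carrier,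
    IsDerivation (iterDual A n) D → IsApproxInner (iterDual A n) D

/-- `A` is `n`-weakly amenable. -/
def NWeaklyAmenable (n : ℕ) : Prop :=
  ∀ D : A →L[ℂ] (iterDual A n).carrier,
    IsDerivation (iterDual A n) D → IsInner (iterDual A n) D

/-- `A` is approximately weakly amenable. -/
def ApproxWeaklyAmenable : Prop := ApproxNWeaklyAmenable A 1

/-- `A` is approximately amenable: every continuous derivation into the dual of a
Banach `A`-bimodule is approximately inner. -/
def ApproxAmenable : Prop :=
  ∀ (X : BBimod A) (D : A →L[ℂ] X.dual.carrier), IsDerivation X.dual D → IsApproxInner X.dual D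

section Concrete
variable (A : Type) [NonUnitalNormedRing A] [NormedSpace ℂ A]
  [IsScalarTower ℂ A A] [SMulCommClass ℂ A A]

/-- The left action of `A` on its dual `A*`: `(a·f)(b) = f (b * a)`. -/
noncomputable def lact (a : A) (f : A →L[ℂ] ℂ) : A →L[ℂ] ℂ :=
  f.comp ((ContinuousLinearMap.mul ℂ A).flip a)

/-- The right action of `A` on its dual `A*`: `(f·a)(b) = f (a * b)`. -/
noncomputable def ract (a : A) (f : A →L[ℂ] ℂ) : A →L[ℂ] ℂ :=
  f.comp (ContinuousLinearMap.mul ℂ A a)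

variable [CompleteSpace A]

/-- `A` is approximately cyclic amenable: every continuous cyclic derivation
`D : A → A*` is approximately inner. -/
def ApproxCyclicAmenable : Prop :=
  ∀ D : A →L[ℂ] (A →L[ℂ] ℂ),
    (∀ a b : A, D (a * b) = lact A a (D b) + ract A b (D a)) →
    (∀ a b : A, D a b + D b a = 0) →
    ∃ (ι : Type) (l : Filter ι) (x : ι → (A →L[ℂ] ℂ)), l.NeBot ∧
      ∀ a : A, Tendsto (fun i => lact A a (x i) - ract A a (x i)) l (𝓝 (D a))

/-- `A` has a bounded (two-sided) approximate identity. -/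
def HasBAI : Prop :=
  ∃ (ι : Type) (l : Filter ι) (e : ι → A) (C : ℝ), l.NeBot ∧ (∀ i, ‖e i‖ ≤ C) ∧
    ∀ a : A, Tendsto (fun i => e i * a) l (𝓝 a) ∧ Tendsto (fun i => a * e i) l (𝓝 a)

end Concrete

section TEP
variable (A : Type) [NonUnitalNormedRing A] [NormedSpace ℂ A]
  [IsScalarTower ℂ A A] [SMulCommClass ℂ A A] [CompleteSpace A]

/-- The closed ideal `I` has the approximate trace extension property: every
`A`-central functional `λ ∈ I*` extends to a net `(Λ_α) ⊆ A*` with `Λ_α|_I = λ`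
and `a·Λ_α − Λ_α·a → 0` for each `a ∈ A`. -/
def ApproxTraceExt (I : Submodule ℂ A)
    (hl : ∀ (a x : A), x ∈ I → a * x ∈ I) (hr : ∀ (a x : A), x ∈ I → x * a ∈ I) : Prop :=
  ∀ lam : ↥I →L[ℂ] ℂ,
    (∀ (a : A) (x : ↥I), lam ⟨(x : A) * a, hr a x x.2⟩ = lam ⟨a * (x : A), hl a x x.2⟩) →
    ∃ (ι : Type) (l : Filter ι) (L : ι → (A →L[ℂ] ℂ)), l.NeBot ∧
      (∀ (i : ι) (x : ↥I), L i (x : A) = lam x) ∧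
      (∀ a : A, Tendsto (fun i => lact A a (L i) - ract A a (L i)) l (𝓝 0))

end TEP
variable (A : Type) [NonUnitalNormedRing A] [NormedSpace ℂ A]
  [IsScalarTower ℂ A A] [SMulCommClass ℂ A A] [CompleteSpace A]

/-! Extend `λ` by Hahn–Banach to `Λ ∈ A*`. Since `λ` is central, the inner derivation
`a ↦ a·Λ − Λ·a`, i.e. the bilinear form `(a, b) ↦ Λ (b a − a b)`, vanishes as soon as one of its
arguments lies in `I`, so it descends to a derivation `D : A/I → (A/I)*`. If `(x_i) ⊆ (A/I)*`
implements `D` approximately, then `Λ_i = Λ − x_i ∘ π` still restricts to `λ` on `I`, and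
`a·Λ_i − Λ_i·a = (a·Λ − Λ·a) − (π a·x_i − x_i·π a) ∘ π → (a·Λ − Λ·a) − D (π a) ∘ π = 0`. -/

structure ContinuousLinearMap.IsQuotient {𝕜 E F : Type*} [NontriviallyNormedField 𝕜]
    [SeminormedAddCommGroup E] [NormedSpace 𝕜 E] [SeminormedAddCommGroup F] [NormedSpace 𝕜 F]
    (π : E →L[𝕜] F) : Prop where
  surjective : Function.Surjective π
  norm_eq_sInf : ∀ q : F, ‖q‖ = sInf {r : ℝ | ∃ a : E, π a = q ∧ ‖a‖ = r}

namespace ContinuousLinearMap.IsQuotient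

variable {𝕜 E F E' F' G : Type*} [NontriviallyNormedField 𝕜]
  [SeminormedAddCommGroup E] [NormedSpace 𝕜 E] [SeminormedAddCommGroup F] [NormedSpace 𝕜 F]
  [SeminormedAddCommGroup E'] [NormedSpace 𝕜 E'] [SeminormedAddCommGroup F'] [NormedSpace 𝕜 F']
  [SeminormedAddCommGroup G] [NormedSpace 𝕜 G]
  {π : E →L[𝕜] F} {π' : E' →L[𝕜] F'}

theorem le_mul_norm (hπ : π.IsQuotient) {q : F} {C r : ℝ} (hC : 0 ≤ C)
    (h : ∀ a, π a = q → r ≤ C * ‖a‖) : r ≤ C * ‖q‖ := by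
  obtain ⟨a₀, ha₀⟩ := hπ.surjective q
  rcases hC.eq_or_lt with rfl | hC
  · simpa using h a₀ ha₀
  rw [hπ.norm_eq_sInf q, ← div_le_iff₀' hC]
  refine le_csInf ⟨‖a₀‖, a₀, ha₀, rfl⟩ ?_
  rintro s ⟨a, ha, rfl⟩
  exact (div_le_iff₀' hC).mpr (h a ha)

theorem exists_comp_eq (hπ : π.IsQuotient) (f : E →L[𝕜] G) (hf : ∀ a, π a = 0 → f a = 0) :
    ∃ g : F →L[𝕜] G, g.comp π = f := by
  let g : F →ₗ[𝕜] G := (LinearMap.ker (π : E →ₗ[𝕜] F)).liftQ f (fun a ha => hf a ha) ∘ₗ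
    ((π : E →ₗ[𝕜] F).quotKerEquivOfSurjective hπ.surjective).symm.toLinearMap
  have hg : ∀ a, g (π a) = f a := fun a => by
    simp only [g, LinearMap.comp_apply, LinearEquiv.coe_coe]
    rw [← coe_coe π, LinearMap.quotKerEquivOfSurjective_symm_apply]
    rfl
  have hbound : ∀ q, ‖g q‖ ≤ ‖f‖ * ‖q‖ := fun q =>
    hπ.le_mul_norm (norm_nonneg f) fun a ha => ha ▸ (hg a).symm ▸ f.le_opNorm a
  exact ⟨g.mkContinuous ‖f‖ hbound, ext fun a => hg a⟩

theorem exists_bilinearComp_eq (hπ : π.IsQuotient) (hπ' : π'.IsQuotient)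
    (f : E →L[𝕜] E' →L[𝕜] G) (hf : ∀ a b, π a = 0 → f a b = 0)
    (hf' : ∀ a b, π' b = 0 → f a b = 0) : ∃ g : F →L[𝕜] F' →L[𝕜] G, g.bilinearComp π π' = f := by
  obtain ⟨g₁, hg₁⟩ := hπ.exists_comp_eq f fun a ha => ext fun b => hf a b ha
  have hg₁' : ∀ a b, g₁ (π a) b = f a b := fun a b => by rw [← hg₁]; rfl
  obtain ⟨g₂, hg₂⟩ := hπ'.exists_comp_eq g₁.flip fun b hb => ext fun q => by
    obtain ⟨a, rfl⟩ := hπ.surjective q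
    simpa [hg₁'] using hf' a b hb
  refine ⟨g₂.flip, ext fun a => ext fun b => ?_⟩
  rw [bilinearComp_apply, flip_apply, ← comp_apply g₂, hg₂, flip_apply, hg₁']

end ContinuousLinearMap.IsQuotient

theorem IsInner.isDerivation {R : Type} [NonUnitalNormedRing R] [NormedSpace ℂ R] {M : BBimod R}
    {D : R →L[ℂ] M.carrier} (hD : IsInner M D) : IsDerivation M D := by
  obtain ⟨x, hx⟩ := hD
  intro a b
  have hcomm : M.lsmul a (M.rsmul b x) = M.rsmul b (M.lsmul a x) :=
    congr($(M.lsmul_rsmul a b) x)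
  simp only [hx, M.lsmul_mul, M.rsmul_mul, comp_apply, map_sub, hcomm]
  abel

section DualActions

variable {R : Type} [NonUnitalNormedRing R] [NormedSpace ℂ R]
  [IsScalarTower ℂ R R] [SMulCommClass ℂ R R]

@[simp]
theorem lact_apply (a : R) (f : R →L[ℂ] ℂ) (b : R) : lact R a f b = f (b * a) := rfl

@[simp]
theorem ract_apply (a : R) (f : R →L[ℂ] ℂ) (b : R) : ract R a f b = f (a * b) := rfl

noncomputable def adDual (Λ : R →L[ℂ] ℂ) : R →L[ℂ] R →L[ℂ] ℂ :=
  compL ℂ R R ℂ Λ ∘L ((ContinuousLinearMap.mul ℂ R).flip - ContinuousLinearMap.mul ℂ R)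

theorem adDual_apply (Λ : R →L[ℂ] ℂ) (a : R) : adDual Λ a = lact R a Λ - ract R a Λ := by
  ext b
  simp [adDual]

variable {Λ : R →L[ℂ] ℂ} {S : Set R}

theorem adDual_eq_zero_of_mem (hΛ : ∀ a, ∀ x ∈ S, Λ (x * a) = Λ (a * x)) {x : R} (hx : x ∈ S) :
    adDual Λ x = 0 := by
  ext a
  simp [adDual_apply, hΛ a x hx]

theorem adDual_apply_eq_zero_of_mem (hΛ : ∀ a, ∀ x ∈ S, Λ (x * a) = Λ (a * x)) (a : R) {x : R}
    (hx : x ∈ S) : adDual Λ a x = 0 := by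
  simp [adDual_apply, hΛ a x hx]

theorem isInner_adDual [CompleteSpace R] (Λ : R →L[ℂ] ℂ) : IsInner (iterDual R 1) (adDual Λ) :=
  ⟨Λ, adDual_apply Λ⟩

theorem isDerivation_iterDual_one_iff [CompleteSpace R] {D : R →L[ℂ] R →L[ℂ] ℂ} :
    IsDerivation (iterDual R 1) D ↔ ∀ a b c, D (a * b) c = D b (c * a) + D a (b * c) := by
  change (∀ a b, D (a * b) = lact R a (D b) + ract R b (D a)) ↔ _
  exact forall₂_congr fun a b => ⟨fun h c => congr($h c), fun h => ext h⟩

theorem isApproxInner_iterDual_one_iff [CompleteSpace R] {D : R →L[ℂ] R →L[ℂ] ℂ} :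
    IsApproxInner (iterDual R 1) D ↔ ∃ (ι : Type) (l : Filter ι) (x : ι → R →L[ℂ] ℂ), l.NeBot ∧
      ∀ a, Tendsto (fun i => lact R a (x i) - ract R a (x i)) l (𝓝 (D a)) :=
  Iff.rfl

variable {Q : Type} [NonUnitalNormedRing Q] [NormedSpace ℂ Q]
  [IsScalarTower ℂ Q Q] [SMulCommClass ℂ Q Q] {π : R →L[ℂ] Q}

theorem IsDerivation.of_bilinearComp [CompleteSpace R] [CompleteSpace Q]
    (hπ : ∀ a b, π (a * b) = π a * π b) (hsurj : Function.Surjective π)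
    {D : Q →L[ℂ] Q →L[ℂ] ℂ}
    (hD : IsDerivation (iterDual R 1) (D.bilinearComp π π : R →L[ℂ] R →L[ℂ] ℂ)) :
    IsDerivation (iterDual Q 1) D := by
  rw [isDerivation_iterDual_one_iff] at hD ⊢
  intro q r s
  obtain ⟨a, rfl⟩ := hsurj q
  obtain ⟨b, rfl⟩ := hsurj r
  obtain ⟨c, rfl⟩ := hsurj s
  simpa only [bilinearComp_apply, hπ] using hD a b c

theorem tendsto_lact_sub_ract_sub_comp (hπ : ∀ a b, π (a * b) = π a * π b)
    {D : Q →L[ℂ] Q →L[ℂ] ℂ} (hD : D.bilinearComp π π = adDual Λ) {ι : Type*} {l : Filter ι}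
    {x : ι → Q →L[ℂ] ℂ} {a : R}
    (hx : Tendsto (fun i => lact Q (π a) (x i) - ract Q (π a) (x i)) l (𝓝 (D (π a)))) :
    Tendsto (fun i => lact R a (Λ - (x i).comp π) - ract R a (Λ - (x i).comp π)) l (𝓝 0) := by
  have hDa : (D (π a)).comp π = adDual Λ a := by rw [← hD]; rfl
  have hsplit : ∀ i, lact R a (Λ - (x i).comp π) - ract R a (Λ - (x i).comp π) =
      adDual Λ a - (lact Q (π a) (x i) - ract Q (π a) (x i)).comp π := fun i => by
    ext b
    simp only [adDual_apply, hπ, sub_apply, lact_apply, ract_apply, comp_apply, map_sub]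
    ring
  simp only [hsplit, ← sub_self (adDual Λ a), ← hDa]
  exact tendsto_const_nhds.sub (((precomp ℂ π).continuous.tendsto _).comp hx)

end DualActions

theorem approxTraceExt_of_quotient_approxWeaklyAmenable
    (I : Submodule ℂ A)
    (hl : ∀ (a x : A), x ∈ I → a * x ∈ I) (hr : ∀ (a x : A), x ∈ I → x * a ∈ I)
    {Q : Type} [NonUnitalNormedRing Q] [NormedSpace ℂ Q]
    [IsScalarTower ℂ Q Q] [SMulCommClass ℂ Q Q] [CompleteSpace Q]
    (π : A →L[ℂ] Q)
    (hπ_mul : ∀ a b : A, π (a * b) = π a * π b)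
    (hπ_surj : Function.Surjective π)
    (hπ_ker : ∀ a : A, π a = 0 ↔ a ∈ I)
    (hπ_norm : ∀ q : Q, ‖q‖ = sInf {r : ℝ | ∃ a : A, π a = q ∧ ‖a‖ = r})
    (hQ : ApproxWeaklyAmenable Q) :
    ApproxTraceExt A I hl hr := by
  intro lam hlam
  obtain ⟨Λ, hΛ, -⟩ := exists_extension_norm_eq I lam
  have htrace : ∀ a, ∀ x ∈ I, Λ (x * a) = Λ (a * x) := fun a x hx => by
    simpa only [← hΛ] using hlam a ⟨x, hx⟩
  have hquot : π.IsQuotient := ⟨hπ_surj, hπ_norm⟩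
  obtain ⟨D, hD⟩ := hquot.exists_bilinearComp_eq hquot (adDual Λ)
    (fun a b ha => by rw [adDual_eq_zero_of_mem htrace ((hπ_ker a).1 ha), zero_apply])
    (fun a b hb => adDual_apply_eq_zero_of_mem htrace a ((hπ_ker b).1 hb))
  have hder : IsDerivation (iterDual Q 1) D :=
    .of_bilinearComp hπ_mul hπ_surj (hD ▸ (isInner_adDual Λ).isDerivation)
  obtain ⟨ι, l, x, hne, hx⟩ := isApproxInner_iterDual_one_iff.1 (hQ D hder)
  refine ⟨ι, l, fun i => Λ - (x i).comp π, hne, fun i y => ?_, fun a => ?_⟩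
  · rw [sub_apply, comp_apply, (hπ_ker y).2 y.2, map_zero, sub_zero, hΛ]
  · exact tendsto_lact_sub_ract_sub_comp hπ_mul hD (hx (π a))
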